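/- Let ⟨A⟩ be a GCNS numerical semigroup with parameters a, k, d, u, B = (b_1,...,b_k), s_1 ≤ ⋯ ≤ s_{k−1}, and let p be a positive divisor of a. Assume u*a + d + k − 2 ≥ Σ_{i=1}^{k−1} s_i. Then for every 0 ≤ r ≤ a/p − 1, the function N_{dr,p}(m) = O_B^H(m*a + r*p) * (a/p) + (m*a/p + r)*d is increasing in m ∈ ℕ; in particular, if X(r*p) = (x_1, ..., x_k) is the greedy presentation of r*p, then the element of the Apéry set of a/p in ⟨A⟩/p congruent to d*r modulo a/p equals N_{dr,p} = (Σ_{i=1}^k (u*b_i + 1)*x_i) * (a/p) + r*d. -/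

import Mathlib

/-!
The weights `h i = u * b i + 1` give `∑ h i * x i = u * M + ∑ x i` for a presentation `x` of
`M`, so `O_B^H(M) = u * M + c(M)`, where `c(M)` is the least number of coins `b 1 < ⋯ < b k`
summing to `M`. Since `b (j + 1) = s j * b j + 1` and `s` is nondecreasing, trading `s j` coins
`b j` and one smaller coin `b m` for `b (j + 1)` and `s (m - 1)` coins `b (m - 1)` never adds
coins; such trades turn any presentation into the greedy one, which is therefore optimal. The
greedy presentation has at most `M / b k + ∑ s i + 2 - k` coins and every presentation at least
`M / b k`, so the hypothesis on `u * a + d` yields `O_B^H(M) ≤ O_B^H(M + a) + d`: this is the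
monotonicity of `N_{dr,p}`. An element `n` of `⟨A⟩/p` in the class of `d * r` comes from a
presentation of `r * p + t * a` with `t ≥ 0`, whence
`n ≥ (a / p) * (O_B^H(r * p + t * a) + d * t) + r * d ≥ (a / p) * O_B^H(r * p) + r * d`,
and the greedy presentation of `r * p` attains this bound.
-/

/-- `OBH k b h M = min { Σ_{i=1}^k h i * x i : Σ_{i=1}^k b i * x i = M, x i ∈ ℕ }`
(1-indexed, as an infimum in `ℕ`). -/
noncomputable def OBH (k : ℕ) (b h : ℕ → ℕ) (M : ℕ) : ℕ :=
  sInf {n : ℕ | ∃ x : ℕ → ℕ, ∑ i ∈ Finset.Icc 1 k, b i * x i = M ∧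
    n = ∑ i ∈ Finset.Icc 1 k, h i * x i}

open Finset

structure IsCoinBasis (k : ℕ) (b s : ℕ → ℕ) : Prop where
  b_one : b 1 = 1
  b_succ : ∀ i, 1 ≤ i → i ≤ k - 1 → b (i + 1) = s i * b i + 1
  one_le_s : ∀ i, 1 ≤ i → i ≤ k - 1 → 1 ≤ s i

/-- Among the presentations `y` of a given `M = ∑ b i * y i`, the greedy presentation `X(M)` is
the unique one with this property. -/
def IsGreedy (k : ℕ) (b y : ℕ → ℕ) : Prop :=
  ∀ j < k, ∑ i ∈ Icc 1 j, b i * y i < b (j + 1)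

namespace IsCoinBasis

variable {k : ℕ} {b s : ℕ → ℕ}

theorem monotoneOn (hB : IsCoinBasis k b s) : MonotoneOn b (Set.Icc 1 k) :=
  monotoneOn_of_le_succ Set.ordConnected_Icc fun i _ hi hi' => by
    simp only [Order.succ_eq_add_one, Set.mem_Icc] at hi hi' ⊢
    rw [hB.b_succ i hi.1 (by omega)]
    nlinarith [hB.one_le_s i hi.1 (by omega)]

theorem one_le (hB : IsCoinBasis k b s) {i : ℕ} (hi : i ∈ Icc 1 k) : 1 ≤ b i := by
  rw [mem_Icc] at hi
  simpa [hB.b_one] using hB.monotoneOn ⟨le_rfl, hi.1.trans hi.2⟩ ⟨hi.1, hi.2⟩ hi.1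

theorem le_top (hB : IsCoinBasis k b s) {i : ℕ} (hi : i ∈ Icc 1 k) : b i ≤ b k := by
  rw [mem_Icc] at hi
  exact hB.monotoneOn ⟨hi.1, hi.2⟩ ⟨hi.1.trans hi.2, le_rfl⟩ hi.2

theorem sum_le_sum_mul (hB : IsCoinBasis k b s) {n : ℕ} (hn : n ≤ k) (y : ℕ → ℕ) :
    ∑ i ∈ Icc 1 n, y i ≤ ∑ i ∈ Icc 1 n, b i * y i :=
  sum_le_sum fun _ hi => Nat.le_mul_of_pos_left _ (hB.one_le (Icc_subset_Icc_right hn hi))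

theorem sum_mul_le_mul_sum (hB : IsCoinBasis k b s) (y : ℕ → ℕ) :
    ∑ i ∈ Icc 1 k, b i * y i ≤ b k * ∑ i ∈ Icc 1 k, y i := by
  rw [mul_sum]
  exact sum_le_sum fun i hi => Nat.mul_le_mul_right _ (hB.le_top hi)

theorem le_sum_s (hB : IsCoinBasis k b s) {j : ℕ} (hj : j ≤ k - 1) :
    j ≤ ∑ i ∈ Icc 1 j, s i := by
  simpa using card_nsmul_le_sum (Icc 1 j) s 1 fun _ hi => by
    rw [mem_Icc] at hi
    exact hB.one_le_s _ hi.1 (hi.2.trans hj)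

theorem isGreedy_of_le_of_eq_imp_zero (hB : IsCoinBasis k b s) {x : ℕ → ℕ}
    (hxle : ∀ i, 1 ≤ i → i ≤ k - 1 → x i ≤ s i)
    (hxzero : ∀ i, 2 ≤ i → i ≤ k - 1 → x i = s i →
      ∀ j, 1 ≤ j → j < i → x j = 0) :
    IsGreedy k b x := by
  intro j hj
  induction j with
  | zero => simp [hB.b_one]
  | succ j ih =>
    rw [sum_Icc_succ_top (by omega), hB.b_succ (j + 1) (by omega) (by omega)]
    rcases (hxle (j + 1) (by omega) (by omega)).lt_or_eq with hlt | heq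
    · nlinarith [ih (by omega)]
    · have hzero : ∑ i ∈ Icc 1 j, b i * x i = 0 := sum_eq_zero fun i hi => by
        rw [mem_Icc] at hi
        rw [hxzero (j + 1) (by omega) (by omega) heq i hi.1 (by omega), mul_zero]
      rw [hzero, heq, mul_comm]
      omega

end IsCoinBasis

namespace IsGreedy

variable {k : ℕ} {b s y z : ℕ → ℕ}

theorem sum_eq_of_sum_mul_eq (hy : IsGreedy k b y) (hz : IsGreedy k b z)
    (h : ∑ i ∈ Icc 1 k, b i * y i = ∑ i ∈ Icc 1 k, b i * z i) :
    ∑ i ∈ Icc 1 k, y i = ∑ i ∈ Icc 1 k, z i := by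
  suffices ∀ j ≤ k, ∑ i ∈ Icc 1 j, b i * y i = ∑ i ∈ Icc 1 j, b i * z i →
      ∑ i ∈ Icc 1 j, y i = ∑ i ∈ Icc 1 j, z i from this k le_rfl h
  intro j
  induction j with
  | zero => simp
  | succ j ih =>
    intro hj hjeq
    have hyj := hy j (by omega)
    have hzj := hz j (by omega)
    rw [sum_Icc_succ_top (by omega), sum_Icc_succ_top (by omega)] at hjeq ⊢
    -- both top coefficients are the quotient of the common value by `b (j + 1)`
    have htop : y (j + 1) = z (j + 1) := by
      have := congrArg (· / b (j + 1)) hjeq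
      simp only [Nat.add_mul_div_left _ _ (hyj.trans_le' (Nat.zero_le _)),
        Nat.div_eq_of_lt hyj, Nat.div_eq_of_lt hzj] at this
      simpa using this
    rw [htop] at hjeq ⊢
    rw [ih (by omega) (by omega)]

theorem sum_Icc_add_le (hB : IsCoinBasis k b s) (hy : IsGreedy k b y) {j : ℕ} (hj : j < k) :
    ∑ i ∈ Icc 1 j, y i + j ≤ ∑ i ∈ Icc 1 j, s i + 1 := by
  induction j with
  | zero => simp
  | succ j ih =>
    have hgreedy := hy (j + 1) hj
    rw [sum_Icc_succ_top (by omega), hB.b_succ (j + 1) (by omega) (by omega),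
      mul_comm (s _)] at hgreedy
    rw [sum_Icc_succ_top (by omega), sum_Icc_succ_top (by omega)]
    rcases lt_or_ge (y (j + 1)) (s (j + 1)) with hlt | hge
    · have := ih (by omega)
      omega
    · have hmul := Nat.mul_le_mul_left (b (j + 1)) hge
      have hzero : ∑ i ∈ Icc 1 j, b i * y i = 0 := by omega
      have hys : y (j + 1) = s (j + 1) :=
        le_antisymm (Nat.le_of_mul_le_mul_left (by omega)
          (hB.one_le (i := j + 1) (mem_Icc.2 ⟨by omega, by omega⟩))) hge
      have := hB.sum_le_sum_mul (n := j) (by omega) y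
      have := hB.le_sum_s (j := j) (by omega)
      omega

theorem sum_add_le (hB : IsCoinBasis k b s) (hk : 1 ≤ k) (hy : IsGreedy k b y) :
    ∑ i ∈ Icc 1 k, y i + k ≤
      (∑ i ∈ Icc 1 k, b i * y i) / b k + ∑ i ∈ Icc 1 (k - 1), s i + 2 := by
  obtain ⟨k, rfl⟩ : ∃ k', k = k' + 1 := ⟨k - 1, by omega⟩
  have htop : y (k + 1) ≤ (∑ i ∈ Icc 1 (k + 1), b i * y i) / b (k + 1) := by
    rw [Nat.le_div_iff_mul_le (hB.one_le (by simp)), sum_Icc_succ_top (by omega), mul_comm]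
    exact Nat.le_add_left _ _
  have := hy.sum_Icc_add_le hB (j := k) (by omega)
  rw [sum_Icc_succ_top (by omega)]
  simp only [Nat.add_sub_cancel] at this ⊢
  omega

end IsGreedy

theorem sum_mul_pi_single (S : Finset ℕ) (f : ℕ → ℕ) (m c : ℕ) :
    ∑ i ∈ S, f i * (Pi.single m c : ℕ → ℕ) i = if m ∈ S then f m * c else 0 := by
  simp [Pi.single_apply]

theorem sum_mul_tsub_add (S : Finset ℕ) (f : ℕ → ℕ) {y sub add : ℕ → ℕ}
    (h : sub ≤ y) :
    ∑ i ∈ S, f i * (y - sub + add) i + ∑ i ∈ S, f i * sub i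
      = ∑ i ∈ S, f i * y i + ∑ i ∈ S, f i * add i := by
  simp only [← sum_add_distrib, ← mul_add]
  refine sum_congr rfl fun i _ => ?_
  have : sub i ≤ y i := h i
  simp only [Pi.add_apply, Pi.sub_apply]
  congr 1
  omega

/-- Trade `s j` coins `b j` and one coin `b m` for one coin `b (j + 1)` and `s (m - 1)` coins
`b (m - 1)`; for `m = 1` the latter sit at index `0`, outside `Icc 1 k`, so they do not count. -/
def trade (s y : ℕ → ℕ) (j m : ℕ) : ℕ → ℕ :=
  y - (Pi.single m 1 + Pi.single j (s j)) + (Pi.single (j + 1) 1 + Pi.single (m - 1) (s (m - 1)))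

theorem sum_mul_trade {k j m : ℕ} {s y : ℕ → ℕ} (hm : 1 ≤ m) (hmj : m ≤ j) (hjk : j < k)
    (hy : Pi.single m 1 + Pi.single j (s j) ≤ y) (f : ℕ → ℕ) :
    ∑ i ∈ Icc 1 k, f i * trade s y j m i + (f m + f j * s j) =
      ∑ i ∈ Icc 1 k, f i * y i +
        (f (j + 1) + if m - 1 ∈ Icc 1 k then f (m - 1) * s (m - 1) else 0) := by
  have hm' : m ∈ Icc 1 k := mem_Icc.2 ⟨hm, by omega⟩
  have hj : j ∈ Icc 1 k := mem_Icc.2 ⟨by omega, by omega⟩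
  have hj' : j + 1 ∈ Icc 1 k := mem_Icc.2 ⟨by omega, hjk⟩
  have hsub : ∑ i ∈ Icc 1 k, f i * (Pi.single m 1 + Pi.single j (s j) : ℕ → ℕ) i =
      f m + f j * s j := by
    simp only [Pi.add_apply, mul_add, sum_add_distrib, sum_mul_pi_single, mul_one, if_pos hm',
      if_pos hj]
  have hadd : ∑ i ∈ Icc 1 k, f i * (Pi.single (j + 1) 1 + Pi.single (m - 1) (s (m - 1)) :
        ℕ → ℕ) i = f (j + 1) + if m - 1 ∈ Icc 1 k then f (m - 1) * s (m - 1) else 0 := by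
    simp only [Pi.add_apply, mul_add, sum_add_distrib, sum_mul_pi_single, mul_one, if_pos hj']
  rw [← hsub, ← hadd]
  exact sum_mul_tsub_add (Icc 1 k) f hy

theorem sum_trade_le {k j m : ℕ} {s y : ℕ → ℕ} (hs : MonotoneOn s (Set.Icc 1 (k - 1)))
    (hm : 1 ≤ m) (hmj : m ≤ j) (hjk : j < k) (hy : Pi.single m 1 + Pi.single j (s j) ≤ y) :
    ∑ i ∈ Icc 1 k, trade s y j m i ≤ ∑ i ∈ Icc 1 k, y i := by
  have := sum_mul_trade hm hmj hjk hy fun _ => 1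
  simp only [one_mul] at this
  have hle : (if m - 1 ∈ Icc 1 k then s (m - 1) else 0) ≤ s j := by
    split_ifs with h
    · rw [mem_Icc] at h
      exact hs ⟨h.1, by omega⟩ ⟨by omega, by omega⟩ (by omega)
    · exact Nat.zero_le _
  omega

namespace IsCoinBasis

variable {k : ℕ} {b s : ℕ → ℕ}

theorem sum_mul_trade_eq (hB : IsCoinBasis k b s) {y : ℕ → ℕ} {j m : ℕ} (hm : 1 ≤ m)
    (hmj : m ≤ j) (hjk : j < k) (hy : Pi.single m 1 + Pi.single j (s j) ≤ y) :
    ∑ i ∈ Icc 1 k, b i * trade s y j m i = ∑ i ∈ Icc 1 k, b i * y i := by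
  have := sum_mul_trade hm hmj hjk hy b
  have hbm : (if m - 1 ∈ Icc 1 k then b (m - 1) * s (m - 1) else 0) + 1 = b m := by
    split_ifs with h
    · rw [mem_Icc] at h
      rw [mul_comm, ← hB.b_succ (m - 1) h.1 (by omega), Nat.sub_add_cancel hm]
    · rw [mem_Icc] at h
      rw [show m = 1 by omega, hB.b_one]
  rw [hB.b_succ j (by omega) (by omega)] at this
  linarith

theorem sum_pow_mul_lt_trade (hB : IsCoinBasis k b s) {y : ℕ → ℕ} {j m : ℕ} (hm : 1 ≤ m)
    (hmj : m ≤ j) (hjk : j < k) (hy : Pi.single m 1 + Pi.single j (s j) ≤ y) :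
    ∑ i ∈ Icc 1 k, 2 ^ i * b i * y i < ∑ i ∈ Icc 1 k, 2 ^ i * b i * trade s y j m i := by
  have := sum_mul_trade hm hmj hjk hy fun i => 2 ^ i * b i
  rw [pow_succ, hB.b_succ j (by omega) (by omega)] at this
  generalize (if m - 1 ∈ Icc 1 k then _ else 0) = c at this
  have hbm : 2 ^ m * b m ≤ 2 ^ j * b j := Nat.mul_le_mul (Nat.pow_le_pow_right two_pos hmj)
    (hB.monotoneOn ⟨hm, by omega⟩ ⟨by omega, by omega⟩ hmj)
  have hbj : 2 ^ j * b j ≤ 2 ^ j * b j * s j :=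
    Nat.le_mul_of_pos_right _ (hB.one_le_s j (by omega) (by omega))
  nlinarith [Nat.one_le_two_pow (n := j)]

theorem exists_sum_lt_of_not_isGreedy (hB : IsCoinBasis k b s) {y : ℕ → ℕ}
    (hy : ¬IsGreedy k b y) :
    ∃ n, n + 1 < k ∧ ∑ i ∈ Icc 1 n, b i * y i < b (n + 1) ∧
      b (n + 2) ≤ ∑ i ∈ Icc 1 (n + 1), b i * y i := by
  classical
  have hex : ∃ j, j < k ∧ b (j + 1) ≤ ∑ i ∈ Icc 1 j, b i * y i := by
    simpa [IsGreedy] using hy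
  obtain ⟨hjk, hfail⟩ := Nat.find_spec hex
  obtain ⟨n, hn⟩ : ∃ n, Nat.find hex = n + 1 := by
    refine Nat.exists_eq_add_one.2 (Nat.pos_of_ne_zero fun h => ?_)
    rw [h] at hfail
    simp [hB.b_one] at hfail
  have hprev := Nat.find_min hex (show n < Nat.find hex by omega)
  push Not at hprev
  rw [hn] at hjk hfail
  exact ⟨n, hjk, hprev (by omega), hfail⟩

theorem exists_single_add_single_le_of_not_isGreedy (hB : IsCoinBasis k b s) {y : ℕ → ℕ}
    (hy : ¬IsGreedy k b y) :
    ∃ j m, 1 ≤ m ∧ m ≤ j ∧ j < k ∧ Pi.single m 1 + Pi.single j (s j) ≤ y := by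
  obtain ⟨n, hnk, hprev, hfail⟩ := hB.exists_sum_lt_of_not_isGreedy hy
  rw [sum_Icc_succ_top (by omega), hB.b_succ (n + 1) (by omega) (by omega),
    mul_comm (s _)] at hfail
  have hys : s (n + 1) ≤ y (n + 1) := by
    by_contra! h
    have := Nat.mul_le_mul_left (b (n + 1)) (Nat.le_sub_one_of_lt h)
    rw [Nat.mul_sub_one] at this
    have := Nat.le_mul_of_pos_right (b (n + 1)) (hB.one_le_s (n + 1) (by omega) (by omega))
    omega
  have hsingle : ∀ m, 1 ≤ m → m ≤ n + 1 →
      1 + (if m = n + 1 then s (n + 1) else 0) ≤ y m →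
      Pi.single m 1 + Pi.single (n + 1) (s (n + 1)) ≤ y := by
    intro m _ _ hym l
    simp only [Pi.add_apply, Pi.single_apply]
    split_ifs at hym ⊢ <;> subst_vars <;> omega
  rcases hys.lt_or_eq with hlt | heq
  · refine ⟨n + 1, n + 1, by omega, le_rfl, hnk, hsingle _ (by omega) le_rfl ?_⟩
    rw [if_pos rfl]
    omega
  · -- the coins below `b (n + 1)` are not all zero
    obtain ⟨m, hm, hym⟩ := exists_ne_zero_of_sum_ne_zero (s := Icc 1 n)
      (f := fun i => b i * y i) (by rw [← heq] at hfail; omega)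
    rw [mem_Icc] at hm
    refine ⟨n + 1, m, hm.1, by omega, hnk, hsingle m hm.1 (by omega) ?_⟩
    rw [if_neg (by omega)]
    exact Nat.pos_of_ne_zero (right_ne_zero_of_mul hym)

theorem exists_isGreedy (hB : IsCoinBasis k b s) (hs : MonotoneOn s (Set.Icc 1 (k - 1)))
    (y : ℕ → ℕ) :
    ∃ w, IsGreedy k b w ∧ ∑ i ∈ Icc 1 k, b i * w i = ∑ i ∈ Icc 1 k, b i * y i ∧
      ∑ i ∈ Icc 1 k, w i ≤ ∑ i ∈ Icc 1 k, y i := by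
  -- each trade raises `∑ 2 ^ i * b i * y i`, which stays below `2 ^ k * ∑ b i * y i`
  have hbound (y : ℕ → ℕ) :
      ∑ i ∈ Icc 1 k, 2 ^ i * b i * y i ≤ 2 ^ k * ∑ i ∈ Icc 1 k, b i * y i := by
    rw [mul_sum]
    refine sum_le_sum fun i hi => ?_
    rw [mul_assoc]
    exact Nat.mul_le_mul_right _ (Nat.pow_le_pow_right two_pos (mem_Icc.1 hi).2)
  induction hn : 2 ^ k * ∑ i ∈ Icc 1 k, b i * y i - ∑ i ∈ Icc 1 k, 2 ^ i * b i * y i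
    using Nat.strong_induction_on generalizing y with
  | _ n ih =>
  by_cases hy : IsGreedy k b y
  · exact ⟨y, hy, rfl, le_rfl⟩
  obtain ⟨j, m, hm, hmj, hjk, hle⟩ := hB.exists_single_add_single_le_of_not_isGreedy hy
  have hval := hB.sum_mul_trade_eq hm hmj hjk hle
  have hlt := hB.sum_pow_mul_lt_trade hm hmj hjk hle
  have := hbound (trade s y j m)
  rw [hval] at this
  obtain ⟨w, hw, hwval, hwcount⟩ := ih _ (by rw [hval]; omega) _ rfl
  exact ⟨w, hw, hwval.trans hval, hwcount.trans (sum_trade_le hs hm hmj hjk hle)⟩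

theorem exists_isGreedy_sum_eq (hB : IsCoinBasis k b s) (hs : MonotoneOn s (Set.Icc 1 (k - 1)))
    (hk : 1 ≤ k) (M : ℕ) : ∃ z, IsGreedy k b z ∧ ∑ i ∈ Icc 1 k, b i * z i = M := by
  obtain ⟨w, hw, hwval, -⟩ := hB.exists_isGreedy hs (Pi.single 1 M)
  refine ⟨w, hw, ?_⟩
  rw [hwval, sum_mul_pi_single, if_pos (mem_Icc.2 ⟨le_rfl, hk⟩), hB.b_one, one_mul]

end IsCoinBasis

theorem IsGreedy.sum_le {k : ℕ} {b s y z : ℕ → ℕ} (hB : IsCoinBasis k b s)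
    (hs : MonotoneOn s (Set.Icc 1 (k - 1)))
    (hz : IsGreedy k b z) (h : ∑ i ∈ Icc 1 k, b i * z i = ∑ i ∈ Icc 1 k, b i * y i) :
    ∑ i ∈ Icc 1 k, z i ≤ ∑ i ∈ Icc 1 k, y i := by
  obtain ⟨w, hw, hwval, hwcount⟩ := hB.exists_isGreedy hs y
  rw [hz.sum_eq_of_sum_mul_eq hw (h.trans hwval.symm)]
  exact hwcount

theorem sum_weight_eq (S : Finset ℕ) (u : ℕ) (b y : ℕ → ℕ) :
    ∑ i ∈ S, (u * b i + 1) * y i = u * ∑ i ∈ S, b i * y i + ∑ i ∈ S, y i := by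
  rw [mul_sum, ← sum_add_distrib]
  exact sum_congr rfl fun i _ => by ring

theorem OBH_le_of_sum_eq {k M : ℕ} {b : ℕ → ℕ} (h : ℕ → ℕ) {x : ℕ → ℕ}
    (hx : ∑ i ∈ Icc 1 k, b i * x i = M) : OBH k b h M ≤ ∑ i ∈ Icc 1 k, h i * x i :=
  Nat.sInf_le ⟨x, hx, rfl⟩

namespace IsCoinBasis

variable {k : ℕ} {b s : ℕ → ℕ}

theorem OBH_eq (hB : IsCoinBasis k b s) (hs : MonotoneOn s (Set.Icc 1 (k - 1))) (u : ℕ)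
    {z : ℕ → ℕ} (hz : IsGreedy k b z) :
    OBH k b (fun i => u * b i + 1) (∑ i ∈ Icc 1 k, b i * z i) =
      u * ∑ i ∈ Icc 1 k, b i * z i + ∑ i ∈ Icc 1 k, z i := by
  refine le_antisymm ?_ (le_csInf ⟨_, z, rfl, rfl⟩ ?_)
  · rw [← sum_weight_eq]
    exact OBH_le_of_sum_eq _ rfl
  · rintro _ ⟨y, hy, rfl⟩
    rw [sum_weight_eq, hy]
    exact Nat.add_le_add_left (hz.sum_le hB hs hy.symm) _

theorem OBH_le_OBH_add (hB : IsCoinBasis k b s) (hs : MonotoneOn s (Set.Icc 1 (k - 1)))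
    (hk : 1 ≤ k) {u a : ℕ} {d : ℤ}
    (hcond : ∑ i ∈ Icc 1 (k - 1), (s i : ℤ) ≤ u * a + d + k - 2) (M : ℕ) :
    (OBH k b (fun i => u * b i + 1) M : ℤ) ≤ OBH k b (fun i => u * b i + 1) (M + a) + d := by
  obtain ⟨z, hz, rfl⟩ := hB.exists_isGreedy_sum_eq hs hk M
  obtain ⟨w, hw, hwM⟩ := hB.exists_isGreedy_sum_eq hs hk (∑ i ∈ Icc 1 k, b i * z i + a)
  rw [← hwM, hB.OBH_eq hs u hz, hB.OBH_eq hs u hw, hwM]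
  have hupper := hz.sum_add_le hB hk
  have hlower : (∑ i ∈ Icc 1 k, b i * z i) / b k ≤ ∑ i ∈ Icc 1 k, w i :=
    calc (∑ i ∈ Icc 1 k, b i * z i) / b k ≤ (∑ i ∈ Icc 1 k, b i * w i) / b k :=
          Nat.div_le_div_right (by omega)
      _ ≤ ∑ i ∈ Icc 1 k, w i := Nat.div_le_of_le_mul (hB.sum_mul_le_mul_sum w)
  zify at hupper hlower
  push_cast
  linarith

theorem OBH_le_OBH_add_mul (hB : IsCoinBasis k b s) (hs : MonotoneOn s (Set.Icc 1 (k - 1)))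
    (hk : 1 ≤ k) {u a : ℕ} {d : ℤ}
    (hcond : ∑ i ∈ Icc 1 (k - 1), (s i : ℤ) ≤ u * a + d + k - 2) (M t : ℕ) :
    (OBH k b (fun i => u * b i + 1) M : ℤ) ≤
      OBH k b (fun i => u * b i + 1) (M + a * t) + d * t := by
  induction t with
  | zero => simp
  | succ t ih =>
    have := hB.OBH_le_OBH_add hs hk hcond (M + a * t)
    rw [mul_add_one, ← add_assoc]
    push_cast
    linarith

end IsCoinBasis

/-- The elements of `⟨A⟩/p` congruent to `d * r` modulo `q`; `y 0` is the coefficient of the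
generator `a` of `⟨A⟩`. -/
def quotientClass (k u a p q : ℕ) (d : ℤ) (b : ℕ → ℕ) (r : ℕ) : Set ℕ :=
  {n : ℕ | (∃ y : ℕ → ℕ, (p * n : ℤ) = (y 0 : ℤ) * a +
      ∑ i ∈ Finset.Icc 1 k, (y i : ℤ) * (((u : ℤ) * b i + 1) * a + d * b i)) ∧
    (q : ℤ) ∣ (n : ℤ) - d * r}

theorem sum_mul_generator (S : Finset ℕ) (u a : ℕ) (d : ℤ) (b y : ℕ → ℕ) :
    ∑ i ∈ S, (y i : ℤ) * (((u : ℤ) * b i + 1) * a + d * b i) =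
      a * ((∑ i ∈ S, (u * b i + 1) * y i : ℕ) : ℤ) +
        d * ((∑ i ∈ S, b i * y i : ℕ) : ℤ) := by
  push_cast
  rw [mul_sum, mul_sum, ← sum_add_distrib]
  exact sum_congr rfl fun i _ => by ring

theorem exists_eq_add_mul_of_dvd_sub {a p q r n y₀ H S : ℕ} {d : ℤ}
    (hcop : IsCoprime (a : ℤ) d) (hapq : a = p * q) (hp : 0 < p) (hrq : r < q)
    (hy : (p * n : ℤ) = y₀ * a + (a * H + d * S)) (hdvd : (q : ℤ) ∣ n - d * r) :
    ∃ t : ℕ, S = r * p + a * t ∧ (n : ℤ) = q * (y₀ + H) + d * (r + q * t) := by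
  have hapq' : (a : ℤ) = p * q := by exact_mod_cast hapq
  obtain ⟨S', hS'⟩ : p ∣ S := by
    have hpd : IsCoprime (p : ℤ) d := hcop.of_isCoprime_of_dvd_left ⟨q, hapq'⟩
    have : (p : ℤ) ∣ d * S := ⟨n - q * (y₀ + H), by
      rw [hapq'] at hy
      linear_combination -hy⟩
    exact Int.natCast_dvd_natCast.1 (hpd.dvd_of_dvd_mul_left this)
  have hn : (n : ℤ) = q * (y₀ + H) + d * S' := by
    refine mul_left_cancel₀ (b := (n : ℤ)) (Int.natCast_ne_zero.2 hp.ne') ?_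
    rw [hS', hapq'] at hy
    push_cast at hy
    linear_combination hy
  have hmod : S' % q = r := by
    have hqd : IsCoprime (q : ℤ) d := hcop.of_isCoprime_of_dvd_left ⟨p, by rw [hapq']; ring⟩
    have : (q : ℤ) ∣ d * (S' - r) := by
      have : d * (S' - r) = (n - d * r) - q * (y₀ + H) := by rw [hn]; ring
      rw [this]
      exact dvd_sub hdvd (dvd_mul_right _ _)
    have := Int.natCast_modEq_iff.1 (Int.modEq_iff_dvd.2 (hqd.dvd_of_dvd_mul_left this)).symm
    rwa [Nat.ModEq, Nat.mod_eq_of_lt hrq] at this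
  obtain ⟨t, ht⟩ : ∃ t, S' = r + q * t := ⟨S' / q, by rw [← hmod, Nat.mod_add_div]⟩
  refine ⟨t, by rw [hS', ht, hapq]; ring, by rw [hn, ht]; push_cast; ring⟩

namespace IsCoinBasis

variable {k : ℕ} {b s : ℕ → ℕ}

theorem le_of_mem_quotientClass (hB : IsCoinBasis k b s)
    (hs : MonotoneOn s (Set.Icc 1 (k - 1))) (hk : 1 ≤ k) {u a p q r : ℕ} {d : ℤ}
    (hcond : ∑ i ∈ Icc 1 (k - 1), (s i : ℤ) ≤ u * a + d + k - 2)
    (hcop : IsCoprime (a : ℤ) d) (hapq : a = p * q) (hp : 0 < p) (hrq : r < q) {n : ℕ}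
    (hn : n ∈ quotientClass k u a p q d b r) :
    (OBH k b (fun i => u * b i + 1) (r * p) : ℤ) * q + r * d ≤ n := by
  obtain ⟨⟨y, hy⟩, hdvd⟩ := hn
  rw [sum_mul_generator] at hy
  obtain ⟨t, hS, hn⟩ := exists_eq_add_mul_of_dvd_sub hcop hapq hp hrq hy hdvd
  set H := ∑ i ∈ Icc 1 k, (u * b i + 1) * y i
  have hbound : (OBH k b (fun i => u * b i + 1) (r * p) : ℤ) ≤ H + d * t := by
    have : (OBH k b (fun i => u * b i + 1) (r * p + a * t) : ℤ) ≤ H := by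
      exact_mod_cast OBH_le_of_sum_eq _ hS
    linarith [hB.OBH_le_OBH_add_mul hs hk hcond (r * p) t]
  have hq : (0 : ℤ) ≤ q := Int.natCast_nonneg q
  rw [hn]
  linarith [mul_le_mul_of_nonneg_left hbound hq, mul_nonneg hq (Int.natCast_nonneg (y 0))]

theorem mem_quotientClass (hB : IsCoinBasis k b s) (hs : MonotoneOn s (Set.Icc 1 (k - 1)))
    (hk : 1 ≤ k) {u a p q r : ℕ} {d : ℤ} (hapq : a = p * q) {n : ℕ}
    (hn : (n : ℤ) = OBH k b (fun i => u * b i + 1) (r * p) * q + r * d) :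
    n ∈ quotientClass k u a p q d b r := by
  obtain ⟨z, hz, hzM⟩ := hB.exists_isGreedy_sum_eq hs hk (r * p)
  have hOBH : OBH k b (fun i => u * b i + 1) (r * p) = ∑ i ∈ Icc 1 k, (u * b i + 1) * z i := by
    rw [sum_weight_eq, ← hzM, hB.OBH_eq hs u hz]
  have hsum (f : ℕ → ℤ) : ∑ i ∈ Icc 1 k, ((Function.update z 0 0 i : ℕ) : ℤ) * f i =
      ∑ i ∈ Icc 1 k, (z i : ℤ) * f i :=
    sum_congr rfl fun i hi => by rw [Function.update_of_ne (by grind)]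
  refine ⟨⟨Function.update z 0 0, ?_⟩, OBH k b (fun i => u * b i + 1) (r * p), by
    rw [hn]
    ring⟩
  rw [Function.update_self, hsum fun i => ((u : ℤ) * b i + 1) * a + d * b i, sum_mul_generator,
    ← hOBH, hzM, hn, hapq]
  push_cast
  ring

theorem eq_of_isLeast_quotientClass (hB : IsCoinBasis k b s)
    (hs : MonotoneOn s (Set.Icc 1 (k - 1))) (hk : 1 ≤ k) {u a p q r : ℕ} {d : ℤ}
    (hcond : ∑ i ∈ Icc 1 (k - 1), (s i : ℤ) ≤ u * a + d + k - 2)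
    (hcop : IsCoprime (a : ℤ) d) (hapq : a = p * q) (hp : 0 < p) (hrq : r < q) {N : ℕ}
    (hN : IsLeast (quotientClass k u a p q d b r) N) :
    (N : ℤ) = OBH k b (fun i => u * b i + 1) (r * p) * q + r * d := by
  refine le_antisymm ?_ (hB.le_of_mem_quotientClass hs hk hcond hcop hapq hp hrq hN.1)
  -- the bound is `r * (u * a + d) + q * c(r * p)`, and `hcond` forces `u * a + d ≥ 1`
  have hnonneg : 0 ≤ (OBH k b (fun i => u * b i + 1) (r * p) * q + r * d : ℤ) := by
    have := hB.le_sum_s (j := k - 1) le_rfl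
    zify [hk] at this
    obtain ⟨z, hz, hzM⟩ := hB.exists_isGreedy_sum_eq hs hk (r * p)
    rw [← hzM, hB.OBH_eq hs u hz, hzM]
    push_cast
    rw [hapq] at hcond
    push_cast at hcond
    nlinarith [mul_nonneg (Int.natCast_nonneg r) (by linarith : (0 : ℤ) ≤ u * (p * q) + d),
      mul_nonneg (Int.natCast_nonneg q)
        (sum_nonneg (s := Icc 1 k) fun i _ => Int.natCast_nonneg (z i))]
  obtain ⟨n, hn⟩ := Int.eq_ofNat_of_zero_le hnonneg
  rw [hn]
  exact_mod_cast hN.2 (hB.mem_quotientClass hs hk hapq hn.symm)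

end IsCoinBasis

theorem stmt_3_general (a k u p : ℕ) (d : ℤ) (b s : ℕ → ℕ)
    (ha : 2 ≤ a) (hk : 2 ≤ k)
    (hgcd : Int.gcd (a : ℤ) d = 1)
    (hb1 : b 1 = 1)
    (hbrec : ∀ i, 1 ≤ i → i ≤ k - 1 → b (i + 1) = s i * b i + 1)
    (hs1 : ∀ i, 1 ≤ i → i ≤ k - 1 → 1 ≤ s i)
    (hsmono : ∀ i, 2 ≤ i → i ≤ k - 1 → s (i - 1) ≤ s i)
    (hp : 0 < p) (hpa : p ∣ a)
    (hcond : (∑ i ∈ Finset.Icc 1 (k - 1), (s i : ℤ)) ≤ (u : ℤ) * a + d + k - 2)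
    -- `x r` is the greedy presentation of `r * p`, for each `0 ≤ r ≤ a/p - 1`
    (x : ℕ → ℕ → ℕ)
    (hxsum : ∀ r, r ≤ a / p - 1 → ∑ i ∈ Finset.Icc 1 k, b i * x r i = r * p)
    (hxle : ∀ r, r ≤ a / p - 1 → ∀ i, 1 ≤ i → i ≤ k - 1 → x r i ≤ s i)
    (hxzero : ∀ r, r ≤ a / p - 1 → ∀ i, 2 ≤ i → i ≤ k - 1 → x r i = s i →
      ∀ j, 1 ≤ j → j < i → x r j = 0)
    -- `N r` is the Apéry element: the least element of `⟨A⟩/p` congruent to `d·r mod a/p`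
    (N : ℕ → ℕ)
    (hN : ∀ r, r ≤ a / p - 1 → IsLeast {n : ℕ |
      (∃ y : ℕ → ℕ, (p * n : ℤ) = (y 0 : ℤ) * a +
        ∑ i ∈ Finset.Icc 1 k, (y i : ℤ) * (((u : ℤ) * b i + 1) * a + d * b i)) ∧
      ((a / p : ℕ) : ℤ) ∣ (n : ℤ) - d * r} (N r)) :
    (∀ r, r ≤ a / p - 1 → ∀ m : ℕ,
      (OBH k b (fun i => u * b i + 1) (m * a + r * p) : ℤ) * ((a / p : ℕ) : ℤ) +
          ((m * (a / p) + r : ℕ) : ℤ) * d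
        ≤ (OBH k b (fun i => u * b i + 1) ((m + 1) * a + r * p) : ℤ) * ((a / p : ℕ) : ℤ) +
          (((m + 1) * (a / p) + r : ℕ) : ℤ) * d) ∧
    (∀ r, r ≤ a / p - 1 →
      (N r : ℤ) = ((∑ i ∈ Finset.Icc 1 k, (u * b i + 1) * x r i : ℕ) : ℤ) *
        ((a / p : ℕ) : ℤ) + (r : ℤ) * d) := by
  have hB : IsCoinBasis k b s := ⟨hb1, hbrec, hs1⟩
  have hs : MonotoneOn s (Set.Icc 1 (k - 1)) :=
    monotoneOn_of_le_succ Set.ordConnected_Icc fun i _ hi hi' => by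
      simp only [Order.succ_eq_add_one, Set.mem_Icc] at hi hi'
      simpa using hsmono (i + 1) (by omega) hi'.2
  have hapq : a = p * (a / p) := (Nat.mul_div_cancel' hpa).symm
  have hq : 0 < a / p := Nat.div_pos (Nat.le_of_dvd (by omega) hpa) hp
  refine ⟨fun r _ m => ?_, fun r hr => ?_⟩
  · have hstep := hB.OBH_le_OBH_add hs (by omega) hcond (m * a + r * p)
    rw [show (m + 1) * a + r * p = m * a + r * p + a by ring]
    push_cast
    nlinarith [mul_le_mul_of_nonneg_right hstep (Int.natCast_nonneg (a / p))]
  · have hx := hB.isGreedy_of_le_of_eq_imp_zero (hxle r hr) (hxzero r hr)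
    rw [hB.eq_of_isLeast_quotientClass hs (by omega) hcond
      (Int.isCoprime_iff_gcd_eq_one.2 hgcd) hapq hp (by omega) (hN r hr),
      ← hxsum r hr, hB.OBH_eq hs u hx, sum_weight_eq]

/-- for a GCNS numerical semigroup `⟨A⟩`, `p` a positive divisor of `a`,
if `u*a + d + k - 2 ≥ Σ_{i=1}^{k-1} s_i`, then
`N_{dr,p}(m) = O_B^H(ma + rp)·(a/p) + (ma/p + r)·d` is increasing in `m`, and the
Apéry element of `a/p` in `⟨A⟩/p` in class `d·r` equals
`(Σ_i (u·b_i + 1)·x_i)·(a/p) + r·d`, where `(x_1,…,x_k)` is the greedy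
presentation of `r·p`. -/
theorem stmt_3 (a k u p : ℕ) (d : ℤ) (b s : ℕ → ℕ)
    (ha : 2 ≤ a) (hk : 2 ≤ k) (hu : 1 ≤ u)
    (hd : d ≠ 0) (hgcd : Int.gcd (a : ℤ) d = 1)
    (hb1 : b 1 = 1)
    (hbrec : ∀ i, 1 ≤ i → i ≤ k - 1 → b (i + 1) = s i * b i + 1)
    (hs1 : ∀ i, 1 ≤ i → i ≤ k - 1 → 1 ≤ s i)
    (hsmono : ∀ i, 2 ≤ i → i ≤ k - 1 → s (i - 1) ≤ s i)
    (hneg : d < 0 → ∀ i, 1 ≤ i → i ≤ k →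
      1 < ((u : ℤ) * b i + 1) * a + d * b i)
    (hp : 0 < p) (hpa : p ∣ a)
    (hcond : (∑ i ∈ Finset.Icc 1 (k - 1), (s i : ℤ)) ≤ (u : ℤ) * a + d + k - 2)
    -- `x r` is the greedy presentation of `r * p`, for each `0 ≤ r ≤ a/p - 1`
    (x : ℕ → ℕ → ℕ)
    (hxsum : ∀ r, r ≤ a / p - 1 → ∑ i ∈ Finset.Icc 1 k, b i * x r i = r * p)
    (hxk : ∀ r, r ≤ a / p - 1 → x r k = r * p / b k)
    (hxle : ∀ r, r ≤ a / p - 1 → ∀ i, 1 ≤ i → i ≤ k - 1 → x r i ≤ s i)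
    (hxzero : ∀ r, r ≤ a / p - 1 → ∀ i, 2 ≤ i → i ≤ k - 1 → x r i = s i →
      ∀ j, 1 ≤ j → j < i → x r j = 0)
    -- `N r` is the Apéry element: the least element of `⟨A⟩/p` congruent to `d·r mod a/p`
    (N : ℕ → ℕ)
    (hN : ∀ r, r ≤ a / p - 1 → IsLeast {n : ℕ |
      (∃ y : ℕ → ℕ, (p * n : ℤ) = (y 0 : ℤ) * a +
        ∑ i ∈ Finset.Icc 1 k, (y i : ℤ) * (((u : ℤ) * b i + 1) * a + d * b i)) ∧
      ((a / p : ℕ) : ℤ) ∣ (n : ℤ) - d * r} (N r)) :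
    (∀ r, r ≤ a / p - 1 → ∀ m : ℕ,
      (OBH k b (fun i => u * b i + 1) (m * a + r * p) : ℤ) * ((a / p : ℕ) : ℤ) +
          ((m * (a / p) + r : ℕ) : ℤ) * d
        ≤ (OBH k b (fun i => u * b i + 1) ((m + 1) * a + r * p) : ℤ) * ((a / p : ℕ) : ℤ) +
          (((m + 1) * (a / p) + r : ℕ) : ℤ) * d) ∧
    (∀ r, r ≤ a / p - 1 →
      (N r : ℤ) = ((∑ i ∈ Finset.Icc 1 k, (u * b i + 1) * x r i : ℕ) : ℤ) *
        ((a / p : ℕ) : ℤ) + (r : ℤ) * d) :=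
  stmt_3_general a k u p d b s ha hk hgcd hb1 hbrec hs1 hsmono hp hpa hcond x hxsum hxle hxzero N hN
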